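/- arXiv:2604.14697 — 8 statements merged into one kernel-verified Lean document; each statement's English description precedes it below -/
import Mathlib

section
/- Let $X$ be a Banach lattice with a quasi-interior point, and let $P\colon X\to X$ be a positive projection satisfying $\alpha\,\mathrm{id}_X\le P$ for some $\alpha>0$. If $B\subseteq X$ is a projection band invariant under $P$, then its disjoint complement $B^{d}$ is also invariant under $P$. -/
/-!
Split `x ∈ Bᵈ` into `x⁺ - x⁻`, so that it suffices to treat `x ≥ 0`. Decompose
`P x = u + c` along `X = B ⊕ Bᵈ`; both parts are positive since `P x` is. From
`α x ≤ P x` one gets `α x ≤ c`, and positivity of `P` applied to `c = P x - u` gives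
`P u ≤ u`. Then `P (u - P u) = 0` while `P (u - P u) ≥ α (u - P u) ≥ 0`, so `P u = u`
and hence `P c = c`. Applying `P` to `c - α x ≥ 0` finally yields
`0 ≤ c - α (u + c)`, whose `B`-component is `-α u`; thus `u = 0` and `P x = c ∈ Bᵈ`.
-/

section LatticeOrderedGroup

variable {G : Type*} [AddCommGroup G] [Lattice G] [IsOrderedAddMonoid G]

lemma add_inf_le_inf_add_inf {a b c : G} (ha : 0 ≤ a) (hb : 0 ≤ b) (hc : 0 ≤ c) :
    (a + b) ⊓ c ≤ a ⊓ c + b ⊓ c := by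
  rw [add_inf, inf_add, inf_add]
  refine le_inf (le_inf inf_le_left ?_) (le_inf ?_ ?_)
  · exact inf_le_right.trans (le_add_of_nonneg_right hb)
  · exact inf_le_right.trans (le_add_of_nonneg_left ha)
  · exact inf_le_right.trans (le_add_of_nonneg_left hc)

lemma nsmul_inf_eq_zero {a b : G} (ha : 0 ≤ a) (hb : 0 ≤ b) (h : a ⊓ b = 0) (n : ℕ) :
    (n • a) ⊓ b = 0 := by
  induction n with
  | zero => simpa using hb
  | succ n ih =>
    refine le_antisymm ?_ (le_inf (nsmul_nonneg ha _) hb)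
    calc ((n + 1) • a) ⊓ b ≤ (n • a) ⊓ b + a ⊓ b :=
          succ_nsmul a n ▸ add_inf_le_inf_add_inf (nsmul_nonneg ha n) ha hb
      _ = 0 := by rw [ih, h, add_zero]

lemma nonneg_of_nsmul_nonneg {n : ℕ} (hn : n ≠ 0) {a : G} (h : 0 ≤ n • a) : 0 ≤ a := by
  have hle : a⁻ ≤ n • a⁺ := calc
    a⁻ ≤ n • a⁻ := le_self_nsmul (negPart_nonneg a) hn
    _ ≤ n • a⁺ := by rwa [← sub_nonneg, ← nsmul_sub, posPart_sub_negPart]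
  have hdisj := nsmul_inf_eq_zero (posPart_nonneg a) (negPart_nonneg a)
    (posPart_inf_negPart_eq_zero a) n
  rw [inf_eq_right.mpr hle] at hdisj
  exact negPart_eq_zero.mp hdisj

lemma posPart_le_abs (a : G) : a⁺ ≤ |a| := sup_le (le_abs_self a) (abs_nonneg a)

lemma negPart_le_abs (a : G) : a⁻ ≤ |a| := sup_le (neg_le_abs a) (abs_nonneg a)

lemma nonneg_left_of_add_nonneg_of_abs_inf_abs_eq_zero {a b : G} (hab : |a| ⊓ |b| = 0)
    (h : 0 ≤ a + b) : 0 ≤ a := by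
  have hle : a⁻ ≤ b⁺ := sup_le_sup_right (neg_le_iff_add_nonneg'.mpr h) 0
  have : a⁻ ≤ |a| ⊓ |b| := le_inf (negPart_le_abs a) (hle.trans (posPart_le_abs b))
  exact negPart_eq_zero.mp (le_antisymm (hab ▸ this) (negPart_nonneg a))

end LatticeOrderedGroup

/-- Nonnegative rational scalars preserve positivity by `nonneg_of_nsmul_nonneg`; closedness of
the positive cone and density of `ℚ` in `ℝ` give the rest. -/
lemma posSMulMono_real_of_closedIciTopology {X : Type*} [AddCommGroup X] [Lattice X]
    [IsOrderedAddMonoid X] [Module ℝ X] [TopologicalSpace X] [ContinuousSMul ℝ X]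
    [ClosedIciTopology X] : PosSMulMono ℝ X := by
  refine PosSMulMono.of_smul_nonneg fun r hr x hx => ?_
  have hinv : ∀ n : ℕ, 0 ≤ (n : ℝ)⁻¹ • x := by
    intro n
    rcases eq_or_ne n 0 with rfl | hn
    · simp
    refine nonneg_of_nsmul_nonneg hn ?_
    rwa [← Nat.cast_smul_eq_nsmul ℝ, smul_smul, mul_inv_cancel₀ (by exact_mod_cast hn), one_smul]
  have habs : ∀ t : ℝ, 0 ≤ |t| • x := by
    refine fun t => Rat.denseRange_cast.induction_on t
      (isClosed_Ici.preimage (by fun_prop : Continuous fun t : ℝ => |t| • x)) fun q => ?_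
    rw [Rat.cast_def, abs_div, Nat.abs_cast, div_eq_mul_inv, ← smul_smul,
      ← Int.cast_abs, ← Nat.cast_natAbs, Nat.cast_smul_eq_nsmul]
    exact nsmul_nonneg (hinv _) _
  simpa [abs_of_nonneg hr] using habs r

section VectorLattice

variable {X : Type*} [AddCommGroup X] [Lattice X] [Module ℝ X] [PosSMulMono ℝ X]

lemma abs_smul_le_of_nonneg {r : ℝ} (hr : 0 ≤ r) (x : X) : |r • x| ≤ r • |x| :=
  abs_le'.mpr ⟨smul_le_smul_of_nonneg_left (le_abs_self x) hr,
    smul_neg r x ▸ smul_le_smul_of_nonneg_left (neg_le_abs x) hr⟩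

lemma abs_smul_le (r : ℝ) (x : X) : |r • x| ≤ |r| • |x| := by
  rcases le_total 0 r with hr | hr
  · rw [abs_of_nonneg hr]
    exact abs_smul_le_of_nonneg hr x
  · rw [abs_of_nonpos hr, ← abs_neg x, ← neg_smul_neg]
    exact abs_smul_le_of_nonneg (neg_nonneg.mpr hr) (-x)

lemma eq_zero_of_nonneg_of_smul_nonpos {α : ℝ} (hα : 0 < α) {v : X} (hv : 0 ≤ v)
    (h : α • v ≤ 0) : v = 0 :=
  (smul_eq_zero.mp (le_antisymm h (smul_nonneg hα.le hv))).resolve_left hα.ne'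

variable [IsOrderedAddMonoid X]

variable (X) in
def disjointComplement (S : Set X) : Submodule ℝ X where
  carrier := {x | ∀ y ∈ S, |x| ⊓ |y| = 0}
  zero_mem' y _ := by simp
  add_mem' {a b} ha hb y hy := by
    refine le_antisymm ?_ (le_inf (abs_nonneg _) (abs_nonneg y))
    calc |a + b| ⊓ |y| ≤ (|a| + |b|) ⊓ |y| := inf_le_inf_right _ (abs_add_le a b)
      _ ≤ |a| ⊓ |y| + |b| ⊓ |y| :=
          add_inf_le_inf_add_inf (abs_nonneg a) (abs_nonneg b) (abs_nonneg y)
      _ = 0 := by rw [ha y hy, hb y hy, add_zero]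
  smul_mem' r a ha y hy := by
    obtain ⟨n, hn⟩ := exists_nat_ge |r|
    refine le_antisymm ?_ (le_inf (abs_nonneg _) (abs_nonneg y))
    have hle : |r • a| ≤ n • |a| := by
      rw [← Nat.cast_smul_eq_nsmul ℝ]
      exact (abs_smul_le r a).trans (smul_le_smul_of_nonneg_right hn (abs_nonneg a))
    calc |r • a| ⊓ |y| ≤ (n • |a|) ⊓ |y| := inf_le_inf_right _ hle
      _ = 0 := nsmul_inf_eq_zero (abs_nonneg a) (abs_nonneg y) (ha y hy) n

lemma mem_disjointComplement_of_abs_le {S : Set X} {x y : X} (hxy : |x| ≤ |y|)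
    (hy : y ∈ disjointComplement X S) : x ∈ disjointComplement X S := fun z hz =>
  le_antisymm (hy z hz ▸ inf_le_inf_right _ hxy) (le_inf (abs_nonneg x) (abs_nonneg z))

lemma nonneg_of_add_nonneg_of_mem_disjointComplement {B : Submodule ℝ X} {b c : X}
    (hb : b ∈ B) (hc : c ∈ disjointComplement X B) (h : 0 ≤ b + c) : 0 ≤ b ∧ 0 ≤ c :=
  ⟨nonneg_left_of_add_nonneg_of_abs_inf_abs_eq_zero (inf_comm |c| |b| ▸ hc b hb) h,
    nonneg_left_of_add_nonneg_of_abs_inf_abs_eq_zero (hc b hb) (add_comm b c ▸ h)⟩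

variable {B : Submodule ℝ X} {P : X →ₗ[ℝ] X} {α : ℝ}

lemma map_mem_disjointComplement_of_nonneg (hproj : ∀ x, P (P x) = P x)
    (hpos : ∀ x, 0 ≤ x → 0 ≤ P x) (hα : 0 < α) (hdom : ∀ x, 0 ≤ x → α • x ≤ P x)
    (hband : ∀ x, ∃ b ∈ B, ∃ c ∈ disjointComplement X B, x = b + c)
    (hinv : ∀ x ∈ B, P x ∈ B) {x : X} (hx : 0 ≤ x) (hxB : x ∈ disjointComplement X B) :
    P x ∈ disjointComplement X B := by
  set D := disjointComplement X B
  obtain ⟨u, huB, c, hcD, hPx⟩ := hband (P x)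
  obtain ⟨hu, hc⟩ := nonneg_of_add_nonneg_of_mem_disjointComplement huB hcD (hPx ▸ hpos x hx)
  have hcx : 0 ≤ c - α • x := by
    refine (nonneg_of_add_nonneg_of_mem_disjointComplement huB
      (D.sub_mem hcD (D.smul_mem α hxB)) ?_).2
    rw [← add_sub_assoc, ← hPx, sub_nonneg]
    exact hdom x hx
  have hPc : P c = (u - P u) + c := by
    rw [eq_sub_of_add_eq' hPx.symm, map_sub, hproj, hPx]
    abel
  have huPu : 0 ≤ u - P u := (nonneg_of_add_nonneg_of_mem_disjointComplement
    (B.sub_mem huB (hinv u huB)) hcD (hPc ▸ hpos c hc)).1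
  have hPu : P u = u := by
    refine (sub_eq_zero.mp (eq_zero_of_nonneg_of_smul_nonpos hα huPu ?_)).symm
    simpa [hproj] using hdom _ huPu
  -- `P c = c` now, so positivity of `P (c - α x)` reads `0 ≤ c - α (u + c)`.
  have hsplit : 0 ≤ (-α) • u + (1 - α) • c := by
    have h := hpos _ hcx
    rw [map_sub, map_smul, hPc, hPu, sub_self, zero_add, hPx] at h
    convert h using 1
    module
  have hαu := (nonneg_of_add_nonneg_of_mem_disjointComplement (B.smul_mem _ huB)
    (D.smul_mem _ hcD) hsplit).1
  have hu0 : u = 0 :=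
    eq_zero_of_nonneg_of_smul_nonpos hα hu (by rwa [neg_smul, neg_nonneg] at hαu)
  rwa [hPx, hu0, zero_add]

lemma map_mem_disjointComplement (hproj : ∀ x, P (P x) = P x)
    (hpos : ∀ x, 0 ≤ x → 0 ≤ P x) (hα : 0 < α) (hdom : ∀ x, 0 ≤ x → α • x ≤ P x)
    (hband : ∀ x, ∃ b ∈ B, ∃ c ∈ disjointComplement X B, x = b + c)
    (hinv : ∀ x ∈ B, P x ∈ B) {x : X} (hxB : x ∈ disjointComplement X B) :
    P x ∈ disjointComplement X B := by
  have key := fun y (hy : 0 ≤ y) =>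
    map_mem_disjointComplement_of_nonneg (x := y) hproj hpos hα hdom hband hinv hy
  rw [← posPart_sub_negPart x, map_sub]
  refine Submodule.sub_mem _ (key _ (posPart_nonneg x) ?_) (key _ (negPart_nonneg x) ?_)
  · refine mem_disjointComplement_of_abs_le ?_ hxB
    rw [abs_of_nonneg (posPart_nonneg x)]
    exact posPart_le_abs x
  · refine mem_disjointComplement_of_abs_le ?_ hxB
    rw [abs_of_nonneg (negPart_nonneg x)]
    exact negPart_le_abs x

end VectorLattice

theorem stmt1_general {X : Type*} [NormedAddCommGroup X] [Lattice X] [IsOrderedAddMonoid X] [HasSolidNorm X] [NormedSpace ℝ X]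
    (P : X →L[ℝ] X) (hproj : ∀ x, P (P x) = P x) (hpos : ∀ x : X, 0 ≤ x → 0 ≤ P x)
    (α : ℝ) (hα : 0 < α) (hdom : ∀ x : X, 0 ≤ x → α • x ≤ P x)
    (B : Submodule ℝ X)
    (hband : ∀ x : X, ∃ b ∈ B, ∃ c : X, (∀ y ∈ B, |c| ⊓ |y| = 0) ∧ x = b + c)
    (hinv : ∀ x ∈ B, P x ∈ B) :
    ∀ x : X, (∀ y ∈ B, |x| ⊓ |y| = 0) → ∀ y ∈ B, |P x| ⊓ |y| = 0 := by
  have : PosSMulMono ℝ X := posSMulMono_real_of_closedIciTopology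
  exact fun x hx => map_mem_disjointComplement (P := (P : X →ₗ[ℝ] X)) hproj hpos hα hdom
    hband hinv hx

/-- In a Banach lattice with a quasi-interior point, if a positive projection `P`
dominates `α • id` for some `α > 0` and leaves a projection band `B` invariant,
then `P` also leaves the disjoint complement `Bᵈ` invariant. -/
theorem stmt1 {X : Type*} [NormedAddCommGroup X] [Lattice X] [IsOrderedAddMonoid X] [HasSolidNorm X] [NormedSpace ℝ X]
    [CompleteSpace X]
    (e : X) (he : 0 ≤ e)
    (hqi : Dense {x : X | ∃ c : ℝ, 0 ≤ c ∧ |x| ≤ c • e})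
    (P : X →L[ℝ] X) (hproj : ∀ x, P (P x) = P x) (hpos : ∀ x : X, 0 ≤ x → 0 ≤ P x)
    (α : ℝ) (hα : 0 < α) (hdom : ∀ x : X, 0 ≤ x → α • x ≤ P x)
    (B : Submodule ℝ X) (hsolid : ∀ x y : X, |x| ≤ |y| → y ∈ B → x ∈ B)
    (hband : ∀ x : X, ∃ b ∈ B, ∃ c : X, (∀ y ∈ B, |c| ⊓ |y| = 0) ∧ x = b + c)
    (hinv : ∀ x ∈ B, P x ∈ B) :
    ∀ x : X, (∀ y ∈ B, |x| ⊓ |y| = 0) → ∀ y ∈ B, |P x| ⊓ |y| = 0 :=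
  stmt1_general P hproj hpos α hα hdom B hband hinv
end

section
/- Let $X$ be a Banach lattice with a quasi-interior point $e$, let $P\colon X\to X$ be a positive projection with $\alpha\,\mathrm{id}_X\le P$ for some $\alpha>0$, and let $Q$ be the band projection onto a $P$-invariant projection band $B$. Then $PQ(Pe)=Q(Pe)$, i.e., $Q(Pe)$ is a fixed point of $P$. -/
/-!
Write `u = P e`, so `0 ≤ u` and `P u = u`. Disjointness of `x - Q x` and `Q x` makes `Q` and
`id - Q` positive, and `P`-invariance of `B` gives `Q (P (u - Q u)) = Q u - P (Q u)`, so
`P (Q u) ≤ Q u`. For `v := Q u - P (Q u) ≥ 0` we have `P v = 0`, hence `α • v ≤ 0`, which forces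
`v = 0`. The only analysis is that a normed lattice is an ordered real vector space: `c • x ≥ 0`
for dyadic `c` by halving in the lattice-ordered group, and for all `c ≥ 0` because the positive
cone is closed.
-/

open Filter Topology

section LatticeOrderedGroup

variable {X : Type*} [Lattice X] [AddCommGroup X] [IsOrderedAddMonoid X]

lemma nonneg_of_two_pow_nsmul_nonneg (k : ℕ) {a : X} (h : 0 ≤ 2 ^ k • a) : 0 ≤ a := by
  induction k with
  | zero => simpa using h
  | succ k ih =>
    refine ih (nsmul_two_semiclosed ?_)
    rwa [← mul_nsmul', ← pow_succ']

lemma nonneg_of_add_nonneg_of_disjoint {a b : X} (h : 0 ≤ a + b) (hd : |a| ⊓ |b| = 0) :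
    0 ≤ a := by
  have hneg : -a ≤ |a| ⊓ |b| :=
    le_inf (neg_le_abs a) ((neg_le_iff_add_nonneg'.mpr h).trans (le_abs_self b))
  rwa [hd, neg_nonpos] at hneg

lemma nonneg_and_sub_nonneg_of_disjoint {x y : X} (hx : 0 ≤ x) (hd : |x - y| ⊓ |y| = 0) :
    0 ≤ y ∧ 0 ≤ x - y :=
  ⟨nonneg_of_add_nonneg_of_disjoint (b := x - y) (by rwa [add_sub_cancel]) (by rwa [inf_comm]),
    nonneg_of_add_nonneg_of_disjoint (b := y) (by rwa [sub_add_cancel]) hd⟩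

end LatticeOrderedGroup

section ClosedCone

variable {X : Type*} [Lattice X] [AddCommGroup X] [IsOrderedAddMonoid X] [Module ℝ X]

lemma dyadic_smul_nonneg (m k : ℕ) {x : X} (hx : 0 ≤ x) : 0 ≤ ((m : ℝ) / 2 ^ k) • x := by
  refine nonneg_of_two_pow_nsmul_nonneg k ?_
  rw [← Nat.cast_smul_eq_nsmul ℝ, smul_smul, Nat.cast_pow, Nat.cast_ofNat,
    mul_div_cancel₀ _ (by positivity), Nat.cast_smul_eq_nsmul]
  exact nsmul_nonneg hx m

variable [TopologicalSpace X] [ClosedIciTopology X] [ContinuousSMul ℝ X]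

lemma real_smul_nonneg {c : ℝ} {x : X} (hc : 0 ≤ c) (hx : 0 ≤ x) : 0 ≤ c • x := by
  have hdyadic : Tendsto (fun n : ℕ ↦ (⌊c * 2 ^ n⌋₊ : ℝ) / 2 ^ n) atTop (𝓝 c) :=
    (tendsto_nat_floor_mul_div_atTop hc).comp (tendsto_pow_atTop_atTop_of_one_lt one_lt_two)
  exact isClosed_Ici.mem_of_tendsto (hdyadic.smul_const x)
    (Eventually.of_forall fun n ↦ dyadic_smul_nonneg _ n hx)

lemma posSMulMono_of_closedIciTopology : PosSMulMono ℝ X :=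
  PosSMulMono.of_smul_nonneg fun _ hc _ hx ↦ real_smul_nonneg hc hx

end ClosedCone

lemma LinearMap.map_eq_self_of_map_le {X : Type*} [AddCommGroup X] [PartialOrder X]
    [IsOrderedAddMonoid X] [Module ℝ X] [PosSMulMono ℝ X]
    (P : X →ₗ[ℝ] X) (hproj : ∀ x, P (P x) = P x)
    {α : ℝ} (hα : 0 < α) (hdom : ∀ x : X, 0 ≤ x → α • x ≤ P x) {y : X} (hy : P y ≤ y) :
    P y = y := by
  have hv : 0 ≤ y - P y := sub_nonneg.mpr hy
  have hPv : P (y - P y) = 0 := by rw [map_sub, hproj, sub_self]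
  have hαv : α • (y - P y) = 0 :=
    le_antisymm (hPv ▸ hdom _ hv) (smul_nonneg hα.le hv)
  exact (sub_eq_zero.mp ((smul_eq_zero_iff_right hα.ne').mp hαv)).symm

theorem stmt2_general {X : Type*} [NormedAddCommGroup X] [Lattice X] [IsOrderedAddMonoid X]
    [HasSolidNorm X] [NormedSpace ℝ X]
    (e : X) (he : 0 ≤ e)
    (P : X →L[ℝ] X) (hproj : ∀ x, P (P x) = P x) (hpos : ∀ x : X, 0 ≤ x → 0 ≤ P x)
    (α : ℝ) (hα : 0 < α) (hdom : ∀ x : X, 0 ≤ x → α • x ≤ P x)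
    (B : Submodule ℝ X)
    (hinv : ∀ x ∈ B, P x ∈ B)
    (Q : X →L[ℝ] X)
    (hQmem : ∀ x : X, Q x ∈ B)
    (hQid : ∀ x ∈ B, Q x = x)
    (hQd : ∀ x : X, ∀ y ∈ B, |x - Q x| ⊓ |y| = 0) :
    P (Q (P e)) = Q (P e) := by
  have : PosSMulMono ℝ X := posSMulMono_of_closedIciTopology
  set u := P e
  have hu : 0 ≤ u := hpos e he
  have hQ_nonneg {x : X} (hx : 0 ≤ x) : 0 ≤ Q x ∧ 0 ≤ x - Q x :=
    nonneg_and_sub_nonneg_of_disjoint hx (hQd x (Q x) (hQmem x))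
  have hcompl : Q (P (u - Q u)) = Q u - P (Q u) := by
    rw [map_sub, hproj, map_sub, hQid _ (hinv _ (hQmem u))]
  have hle : P (Q u) ≤ Q u := by
    rw [← sub_nonneg, ← hcompl]
    exact (hQ_nonneg (hpos _ (hQ_nonneg hu).2)).1
  exact (P : X →ₗ[ℝ] X).map_eq_self_of_map_le hproj hα hdom hle

/-- Let `X` be a Banach lattice with quasi-interior point `e`, `P` a positive
projection with `α • id ≤ P` for some `α > 0`, and `Q` the band projection onto
a `P`-invariant projection band `B`. Then `Q (P e)` is a fixed point of `P`. -/
theorem stmt2 {X : Type*} [NormedAddCommGroup X] [Lattice X] [IsOrderedAddMonoid X]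
    [HasSolidNorm X] [NormedSpace ℝ X]
    [CompleteSpace X]
    (e : X) (he : 0 ≤ e)
    (hqi : Dense {x : X | ∃ c : ℝ, 0 ≤ c ∧ |x| ≤ c • e})
    (P : X →L[ℝ] X) (hproj : ∀ x, P (P x) = P x) (hpos : ∀ x : X, 0 ≤ x → 0 ≤ P x)
    (α : ℝ) (hα : 0 < α) (hdom : ∀ x : X, 0 ≤ x → α • x ≤ P x)
    (B : Submodule ℝ X) (hsolid : ∀ x y : X, |x| ≤ |y| → y ∈ B → x ∈ B)
    (hinv : ∀ x ∈ B, P x ∈ B)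
    (Q : X →L[ℝ] X)
    (hQmem : ∀ x : X, Q x ∈ B)
    (hQid : ∀ x ∈ B, Q x = x)
    (hQd : ∀ x : X, ∀ y ∈ B, |x - Q x| ⊓ |y| = 0) :
    P (Q (P e)) = Q (P e) :=
  stmt2_general e he P hproj hpos α hα hdom B hinv Q hQmem hQid hQd
end

section
/- Let $X$ be a Banach lattice and $P\colon X\to X$ a strictly positive projection. Then the range $P(X)$ is a vector sublattice of $X$. -/
/-!
If `x` and `y` are fixed by `P`, positivity gives `x ⊔ y ≤ P (x ⊔ y)`, and the nonnegative
vector `P (x ⊔ y) - x ⊔ y` is killed by the idempotent `P`; strict positivity forces it to vanish,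
so `x ⊔ y = P (x ⊔ y)` lies in the range. Infima follow from `x ⊓ y = -(-x ⊔ -y)`.
-/

section StrictlyPositive

variable {X F : Type*} [AddCommGroup X] [Lattice X] [IsOrderedAddMonoid X]
  [FunLike F X X] [AddMonoidHomClass F X X] {P : F}

theorem monotone_of_map_pos (hstrict : ∀ x : X, 0 < x → 0 < P x) : Monotone P :=
  (monotone_iff_map_nonneg P).2 fun x hx => by
    rcases hx.eq_or_lt with rfl | hx
    · rw [map_zero]
    · exact (hstrict x hx).le

theorem sup_mem_range_of_map_pos (hproj : ∀ x, P (P x) = P x)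
    (hstrict : ∀ x : X, 0 < x → 0 < P x) {x y : X}
    (hx : x ∈ Set.range P) (hy : y ∈ Set.range P) : x ⊔ y ∈ Set.range P := by
  obtain ⟨u, rfl⟩ := hx
  obtain ⟨v, rfl⟩ := hy
  set s := P u ⊔ P v
  have hmono := monotone_of_map_pos hstrict
  have hle : s ≤ P s := sup_le
    (by simpa only [hproj] using hmono (le_sup_left : P u ≤ s))
    (by simpa only [hproj] using hmono (le_sup_right : P v ≤ s))
  have hker : P (P s - s) = 0 := by rw [map_sub, hproj, sub_self]
  have hfix : P s - s = 0 := by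
    by_contra hne
    exact (hstrict _ ((sub_nonneg.2 hle).lt_of_ne' hne)).ne' hker
  exact ⟨s, sub_eq_zero.1 hfix⟩

theorem inf_mem_range_of_map_pos (hproj : ∀ x, P (P x) = P x)
    (hstrict : ∀ x : X, 0 < x → 0 < P x) {x y : X}
    (hx : x ∈ Set.range P) (hy : y ∈ Set.range P) : x ⊓ y ∈ Set.range P := by
  have hneg : ∀ {z : X}, z ∈ Set.range P → -z ∈ Set.range P := by
    rintro _ ⟨w, rfl⟩
    exact ⟨-w, map_neg P w⟩
  simpa only [neg_sup, neg_neg] using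
    hneg (sup_mem_range_of_map_pos hproj hstrict (hneg hx) (hneg hy))

end StrictlyPositive

theorem stmt4_general {X : Type*} [NormedAddCommGroup X] [Lattice X]
    [IsOrderedAddMonoid X] [NormedSpace ℝ X]
    (P : X →ₗ[ℝ] X) (hproj : ∀ x, P (P x) = P x)
    (hstrict : ∀ x : X, 0 < x → 0 < P x) :
    ∀ x ∈ Set.range P, ∀ y ∈ Set.range P,
      x ⊔ y ∈ Set.range P ∧ x ⊓ y ∈ Set.range P :=
  fun _ hx _ hy =>
    ⟨sup_mem_range_of_map_pos hproj hstrict hx hy, inf_mem_range_of_map_pos hproj hstrict hx hy⟩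

/-- The range of a strictly positive projection on a Banach lattice is a vector
sublattice: it is closed under the lattice operations of `X`. -/
theorem stmt4 {X : Type*} [NormedAddCommGroup X] [Lattice X] [HasSolidNorm X]
    [IsOrderedAddMonoid X] [NormedSpace ℝ X]
    [CompleteSpace X]
    (P : X →ₗ[ℝ] X) (hproj : ∀ x, P (P x) = P x)
    (hstrict : ∀ x : X, 0 < x → 0 < P x) :
    ∀ x ∈ Set.range P, ∀ y ∈ Set.range P,
      x ⊔ y ∈ Set.range P ∧ x ⊓ y ∈ Set.range P :=
  stmt4_general P hproj hstrict
end

section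
/- Let $K$ be a non-empty compact Hausdorff space and let $P\colon C(K)\to C(K)$ be a positive projection with $P\mathbb{1}_K=\mathbb{1}_K$. Suppose $\alpha\ge 0$ satisfies: (i) $\alpha\,\mathrm{id}_{C(K)}\le P$, and (ii) whenever $f\in C(K)_+$ is such that the multiplication operator $M_f$ satisfies $0\le M_f\le P$, then $\|f\|_\infty\le\alpha$. Then either $\alpha=0$ or $\alpha=1/n$ for some positive integer $n$. -/
/-!
Assume `α > 0`. Kadison–Schwarz and `α • id ≤ P` make the range of `P` closed under squaring, so
the range separates `x` from every point outside the fiber `{y | ∀ g, P g y = P g x}`; hence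
`P g x = 0` whenever `g ≥ 0` vanishes on the fiber of `x`. Testing `P` against disjoint bumps
`b y` around the points of a fiber gives `#fiber * α ≤ 1`, and `∑ y, P (b y) y = 1` over a whole
fiber. On a fiber of maximal cardinality `k`, every fiber near `y` meets the neighbourhood of `b y`
in a single point, which makes a cut-off of `P (b y)` a multiplier below `P`; maximality of `α`
then gives `P (b y) y ≤ α`, so `k * α = 1`.
-/

open Set Finset

section Bumps

variable {X : Type*} [TopologicalSpace X]

structure IsBumpFamily (S : Finset X) (U : X → Set X) (b : X → C(X, ℝ)) : Prop where
  isOpen : ∀ y, IsOpen (U y)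
  mem : ∀ y, y ∈ U y
  pairwiseDisjoint : (S : Set X).PairwiseDisjoint U
  nonneg : ∀ y, 0 ≤ b y
  le_one : ∀ y, b y ≤ 1
  apply_self : ∀ y, b y y = 1
  apply_of_notMem : ∀ y w, w ∉ U y → b y w = 0

theorem IsBumpFamily.exists [T2Space X] [NormalSpace X] (S : Finset X) :
    ∃ U b, IsBumpFamily S U b := by
  obtain ⟨U, hU, hdisj⟩ := S.finite_toSet.t2_separation
  have hbump : ∀ y, ∃ f : C(X, ℝ), EqOn f 0 (U y)ᶜ ∧ EqOn f 1 {y} ∧ ∀ w, f w ∈ Set.Icc 0 1 :=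
    fun y => exists_continuous_zero_one_of_isClosed (hU y).2.isClosed_compl isClosed_singleton
      (disjoint_singleton_right.2 (not_not.2 (hU y).1))
  choose b hb0 hb1 hbIcc using hbump
  exact ⟨U, b, fun y => (hU y).2, fun y => (hU y).1, hdisj, fun y w => (hbIcc y w).1,
    fun y w => (hbIcc y w).2, fun y => hb1 y rfl, fun y w hw => hb0 y hw⟩

namespace IsBumpFamily

variable {S : Finset X} {U : X → Set X} {b : X → C(X, ℝ)}

theorem sum_apply_of_mem (hb : IsBumpFamily S U b) {y w : X} (hy : y ∈ S) (hw : w ∈ U y) :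
    ∑ z ∈ S, b z w = b y w :=
  Finset.sum_eq_single_of_mem y hy fun z hz hzy =>
    hb.apply_of_notMem z w fun hwz => disjoint_left.1 (hb.pairwiseDisjoint hz hy hzy) hwz hw

theorem sum_le_one (hb : IsBumpFamily S U b) : ∑ y ∈ S, b y ≤ 1 := by
  refine ContinuousMap.le_def.2 fun w => ?_
  rw [ContinuousMap.sum_apply]
  by_cases h : ∃ y ∈ S, w ∈ U y
  · obtain ⟨y, hy, hw⟩ := h
    rw [hb.sum_apply_of_mem hy hw]
    exact hb.le_one y w
  · push Not at h
    rw [Finset.sum_eq_zero fun y hy => hb.apply_of_notMem y w (h y hy)]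
    exact zero_le_one

theorem sum_apply_self (hb : IsBumpFamily S U b) {y : X} (hy : y ∈ S) :
    ∑ z ∈ S, b z y = 1 := by
  rw [hb.sum_apply_of_mem hy (hb.mem y), hb.apply_self]

end IsBumpFamily

end Bumps

theorem ContinuousMap.exists_le_const_add_smul {X : Type*} [TopologicalSpace X] [CompactSpace X]
    {g q : C(X, ℝ)} (hq0 : 0 ≤ q) {ε : ℝ} (hε : 0 < ε) (hq : ∀ y, ε ≤ g y → 0 < q y) :
    ∃ C : ℝ, g ≤ ε • 1 + C • q := by
  obtain ⟨δ, hδ, hδq⟩ := (isClosed_le continuous_const g.continuous).isCompact.exists_forall_le'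
    q.continuous.continuousOn hq
  have hC : 0 ≤ ‖g‖ / δ := div_nonneg (norm_nonneg g) hδ.le
  refine ⟨‖g‖ / δ, ContinuousMap.le_def.2 fun y => ?_⟩
  have hqy : 0 ≤ ‖g‖ / δ * q y := mul_nonneg hC (hq0 y)
  simp only [ContinuousMap.add_apply, ContinuousMap.smul_apply, ContinuousMap.one_apply,
    smul_eq_mul, mul_one]
  by_cases hy : ε ≤ g y
  · calc g y ≤ ‖g‖ / δ * δ := by rw [div_mul_cancel₀ _ hδ.ne']; exact g.apply_le_norm y
      _ ≤ ‖g‖ / δ * q y := mul_le_mul_of_nonneg_left (hδq y hy) hC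
      _ ≤ ε + ‖g‖ / δ * q y := le_add_of_nonneg_left hε.le
  · linarith

theorem Set.subsingleton_inter_of_ncard_le_card {ι α : Type*} {F : Finset ι} {U : ι → Set α}
    (hU : (F : Set ι).PairwiseDisjoint U) {T : Set α} (hT : T.Finite) (hcard : T.ncard ≤ #F)
    (hmeet : ∀ w ∈ F, (T ∩ U w).Nonempty) {w : ι} (hw : w ∈ F) : (T ∩ U w).Subsingleton := by
  have : Nonempty α := ⟨(hmeet w hw).some⟩
  choose! p hp using hmeet
  have hinj : InjOn p F := fun v hv v' hv' hpv => hU.elim hv hv' <|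
    not_disjoint_iff.2 ⟨p v, (hp v hv).2, hpv ▸ (hp v' hv').2⟩
  have himage : p '' F = T := eq_of_subset_of_ncard_le (image_subset_iff.2 fun v hv => (hp v hv).1)
    (by rwa [hinj.ncard_image, ncard_coe_finset]) hT
  suffices ∀ y ∈ T ∩ U w, y = p w from fun y hy y' hy' => (this y hy).trans (this y' hy').symm
  rintro y ⟨hyT, hyU⟩
  obtain ⟨v, hv, rfl⟩ := himage ▸ hyT
  rw [hU.elim hv hw (not_disjoint_iff.2 ⟨p v, (hp v hv).2, hyU⟩)]

namespace PositiveProjection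

variable {K : Type*} [TopologicalSpace K] {P : C(K, ℝ) →ₗ[ℝ] C(K, ℝ)}

variable (P) in
def fiber (x : K) : Set K := {y | ∀ g, P g y = P g x}

theorem mem_fiber_self (x : K) : x ∈ fiber P x := fun _ => rfl

theorem monotone_of_nonneg (hpos : ∀ f : C(K, ℝ), 0 ≤ f → 0 ≤ P f) : Monotone P :=
  fun g h hgh => by simpa using hpos (h - g) (sub_nonneg.2 hgh)

theorem le_map_apply_of_apply_eq_one {α : ℝ} (hdom : ∀ f : C(K, ℝ), 0 ≤ f → α • f ≤ P f)
    {g : C(K, ℝ)} (hg : 0 ≤ g) {y : K} (hgy : g y = 1) : α ≤ P g y := by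
  simpa [hgy] using hdom g hg y

theorem sq_apply_le_map_mul_self (hpos : ∀ f : C(K, ℝ), 0 ≤ f → 0 ≤ P f) (hunit : P 1 = 1)
    (a : C(K, ℝ)) (x : K) : P a x ^ 2 ≤ P (a * a) x := by
  set t := P a x
  have hexpand : (a - t • 1) * (a - t • 1) = a * a - (2 * t) • a + t ^ 2 • 1 := by
    ext; simp; ring
  have h := hpos _ (IsSelfAdjoint.mul_self_nonneg (a := a - t • 1) rfl) x
  simp [hexpand, hunit] at h
  nlinarith

theorem map_mul_self_of_map_eq (hproj : ∀ f, P (P f) = P f)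
    (hpos : ∀ f : C(K, ℝ), 0 ≤ f → 0 ≤ P f) (hunit : P 1 = 1) {α : ℝ} (hα : 0 < α)
    (hdom : ∀ f : C(K, ℝ), 0 ≤ f → α • f ≤ P f) {a : C(K, ℝ)} (ha : P a = a) :
    P (a * a) = a * a := by
  set q := P (a * a) - a * a
  have hq : 0 ≤ q := ContinuousMap.le_def.2 fun x => by
    simpa [q, ha, sq] using sq_apply_le_map_mul_self hpos hunit a x
  have hPq : α • q ≤ 0 := by simpa [q, hproj] using hdom q hq
  rw [← smul_zero α, smul_le_smul_iff_of_pos_left hα] at hPq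
  exact sub_eq_zero.1 (le_antisymm hPq hq)

theorem exists_map_eq_self_apply_pos (hproj : ∀ f, P (P f) = P f)
    (hpos : ∀ f : C(K, ℝ), 0 ≤ f → 0 ≤ P f) (hunit : P 1 = 1) {α : ℝ} (hα : 0 < α)
    (hdom : ∀ f : C(K, ℝ), 0 ≤ f → α • f ≤ P f) {x z : K} (hz : z ∉ fiber P x) :
    ∃ h, P h = h ∧ 0 ≤ h ∧ h x = 0 ∧ 0 < h z := by
  obtain ⟨f, hf⟩ : ∃ f, P f z ≠ P f x := by simpa [fiber] using hz
  set a := P f - P f x • 1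
  have ha : P a = a := by simp [a, hproj, hunit]
  refine ⟨a * a, map_mul_self_of_map_eq hproj hpos hunit hα hdom ha,
    IsSelfAdjoint.mul_self_nonneg rfl, by simp [a], ?_⟩
  simpa [a] using mul_self_pos.2 (sub_ne_zero.2 hf)

theorem exists_map_eq_self_pos_on (hproj : ∀ f, P (P f) = P f)
    (hpos : ∀ f : C(K, ℝ), 0 ≤ f → 0 ≤ P f) (hunit : P 1 = 1) {α : ℝ} (hα : 0 < α)
    (hdom : ∀ f : C(K, ℝ), 0 ≤ f → α • f ≤ P f) {x : K} {S : Set K} (hS : IsCompact S)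
    (hSx : Disjoint S (fiber P x)) :
    ∃ h, P h = h ∧ 0 ≤ h ∧ h x = 0 ∧ ∀ z ∈ S, 0 < h z := by
  refine hS.induction_on (p := fun T => ∃ h, P h = h ∧ 0 ≤ h ∧ h x = 0 ∧ ∀ z ∈ T, 0 < h z)
    ⟨0, map_zero P, le_rfl, rfl, fun _ => False.elim⟩
    (fun T T' hTT' ⟨h, hPh, h0, hx, hT'⟩ => ⟨h, hPh, h0, hx, fun z hz => hT' z (hTT' hz)⟩)
    (fun T T' ⟨h, hPh, h0, hx, hT⟩ ⟨h', hPh', h0', hx', hT'⟩ =>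
      ⟨h + h', by rw [map_add, hPh, hPh'], add_nonneg h0 h0', by simp [hx, hx'], ?_⟩) ?_
  · rintro z (hz | hz)
    · exact add_pos_of_pos_of_nonneg (hT z hz) (h0' z)
    · exact add_pos_of_nonneg_of_pos (h0 z) (hT' z hz)
  · intro z hz
    obtain ⟨h, hPh, h0, hx, hzpos⟩ :=
      exists_map_eq_self_apply_pos hproj hpos hunit hα hdom (disjoint_left.1 hSx hz)
    exact ⟨{w | 0 < h w}, mem_nhdsWithin_of_mem_nhds
      ((isOpen_lt continuous_const h.continuous).mem_nhds hzpos), h, hPh, h0, hx, fun _ hw => hw⟩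

theorem map_apply_eq_zero_of_eqOn_fiber [CompactSpace K] (hproj : ∀ f, P (P f) = P f)
    (hpos : ∀ f : C(K, ℝ), 0 ≤ f → 0 ≤ P f) (hunit : P 1 = 1) {α : ℝ} (hα : 0 < α)
    (hdom : ∀ f : C(K, ℝ), 0 ≤ f → α • f ≤ P f) {x : K} {g : C(K, ℝ)} (hg : 0 ≤ g)
    (hgx : EqOn g 0 (fiber P x)) : P g x = 0 := by
  refine le_antisymm (le_of_forall_pos_le_add fun ε hε => ?_) (hpos g hg x)
  obtain ⟨q, hPq, hq0, hqx, hq⟩ := exists_map_eq_self_pos_on hproj hpos hunit hα hdom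
    (x := x) (isClosed_le continuous_const g.continuous).isCompact (S := {y | ε ≤ g y})
    (disjoint_left.2 fun y hy hyx => by simp [hgx hyx] at hy; linarith)
  obtain ⟨C, hC⟩ := ContinuousMap.exists_le_const_add_smul hq0 hε hq
  simpa [hunit, hPq, hqx] using monotone_of_nonneg hpos hC x

theorem card_mul_le_one [T2Space K] [NormalSpace K] (hpos : ∀ f : C(K, ℝ), 0 ≤ f → 0 ≤ P f)
    (hunit : P 1 = 1) {α : ℝ} (hdom : ∀ f : C(K, ℝ), 0 ≤ f → α • f ≤ P f) {x : K}
    {S : Finset K} (hS : ↑S ⊆ fiber P x) : #S * α ≤ 1 := by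
  obtain ⟨U, b, hb⟩ := IsBumpFamily.exists S
  calc #S * α = ∑ _y ∈ S, α := by rw [sum_const, nsmul_eq_mul]
    _ ≤ ∑ y ∈ S, P (b y) x := sum_le_sum fun y hy => hS hy (b y) ▸
        le_map_apply_of_apply_eq_one hdom (hb.nonneg y) (hb.apply_self y)
    _ = P (∑ y ∈ S, b y) x := by rw [map_sum, ContinuousMap.sum_apply]
    _ ≤ P 1 x := monotone_of_nonneg hpos hb.sum_le_one x
    _ = 1 := by rw [hunit, ContinuousMap.one_apply]

theorem ncard_fiber_mul_le_one [T2Space K] [NormalSpace K]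
    (hpos : ∀ f : C(K, ℝ), 0 ≤ f → 0 ≤ P f) (hunit : P 1 = 1) {α : ℝ}
    (hdom : ∀ f : C(K, ℝ), 0 ≤ f → α • f ≤ P f) (x : K) : (fiber P x).ncard * α ≤ 1 := by
  by_cases hfin : (fiber P x).Finite
  · obtain ⟨S, hS⟩ := hfin.exists_finset_coe
    rw [← hS, ncard_coe_finset]
    exact card_mul_le_one hpos hunit hdom hS.subset
  · simp [Set.Infinite.ncard hfin]

theorem finite_fiber [T2Space K] [NormalSpace K] (hpos : ∀ f : C(K, ℝ), 0 ≤ f → 0 ≤ P f)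
    (hunit : P 1 = 1) {α : ℝ} (hα : 0 < α) (hdom : ∀ f : C(K, ℝ), 0 ≤ f → α • f ≤ P f) (x : K) :
    (fiber P x).Finite := by
  by_contra hinf
  obtain ⟨n, hn⟩ := exists_nat_gt α⁻¹
  obtain ⟨S, hS, hcard⟩ := Set.Infinite.exists_subset_card_eq hinf n
  have := card_mul_le_one hpos hunit hdom hS
  rw [hcard] at this
  have := (inv_lt_iff_one_lt_mul₀ hα).1 hn
  linarith

theorem exists_forall_ncard_fiber_le [Nonempty K] [T2Space K] [NormalSpace K]
    (hpos : ∀ f : C(K, ℝ), 0 ≤ f → 0 ≤ P f) (hunit : P 1 = 1) {α : ℝ} (hα : 0 < α)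
    (hdom : ∀ f : C(K, ℝ), 0 ≤ f → α • f ≤ P f) :
    ∃ x, ∀ z, (fiber P z).ncard ≤ (fiber P x).ncard := by
  have hbdd : BddAbove (range fun z => (fiber P z).ncard) := by
    refine ⟨⌊1 / α⌋₊, ?_⟩
    rintro _ ⟨z, rfl⟩
    exact Nat.le_floor ((le_div_iff₀ hα).2 (ncard_fiber_mul_le_one hpos hunit hdom z))
  obtain ⟨x, hx⟩ := Nat.sSup_mem (range_nonempty _) hbdd
  exact ⟨x, fun z => (le_csSup hbdd ⟨z, rfl⟩).trans_eq hx.symm⟩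

theorem map_apply_mul_le [CompactSpace K] (hproj : ∀ f, P (P f) = P f)
    (hpos : ∀ f : C(K, ℝ), 0 ≤ f → 0 ≤ P f) (hunit : P 1 = 1) {α : ℝ} (hα : 0 < α)
    (hdom : ∀ f : C(K, ℝ), 0 ≤ f → α • f ≤ P f) {z : K} {U : Set K} (hzU : fiber P z ∩ U ⊆ {z})
    {b g : C(K, ℝ)} (hb1 : b ≤ 1) (hbU : ∀ w ∉ U, b w = 0) (hg : 0 ≤ g) :
    P b z * g z ≤ P g z := by
  set r := (g z • b - g) ⊔ 0
  have hr : EqOn r 0 (fiber P z) := by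
    intro y hy
    have : g z * b y ≤ g y := by
      by_cases hyU : y ∈ U
      · obtain rfl : y = z := hzU ⟨hy, hyU⟩
        exact mul_le_of_le_one_right (hg y) (hb1 y)
      · simpa [hbU y hyU] using hg y
    simp [r, this]
  have hPr := map_apply_eq_zero_of_eqOn_fiber hproj hpos hunit hα hdom le_sup_right hr
  have hle : g z • b ≤ g + r := ContinuousMap.le_def.2 fun w => by
    simp only [r, ContinuousMap.smul_apply, ContinuousMap.add_apply, ContinuousMap.sup_apply,
      ContinuousMap.sub_apply, ContinuousMap.zero_apply, smul_eq_mul]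
    linarith [le_max_left (g z * b w - g w) 0]
  have := ContinuousMap.le_def.1 (monotone_of_nonneg hpos hle) z
  simp only [map_smul, map_add, ContinuousMap.smul_apply, ContinuousMap.add_apply,
    smul_eq_mul] at this
  linarith

theorem apply_le_of_mul_le_map_on [CompactSpace K] [T2Space K]
    (hpos : ∀ f : C(K, ℝ), 0 ≤ f → 0 ≤ P f) {α : ℝ}
    (hmax : ∀ f : C(K, ℝ), 0 ≤ f → (∀ g : C(K, ℝ), 0 ≤ g → f * g ≤ P g) → ‖f‖ ≤ α)
    {V : Set K} (hV : IsOpen V) {y : K} (hy : y ∈ V) {h : C(K, ℝ)} (h0 : 0 ≤ h)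
    (hle : ∀ z ∈ V, ∀ g : C(K, ℝ), 0 ≤ g → h z * g z ≤ P g z) : h y ≤ α := by
  obtain ⟨φ, hφ0, hφ1, hφ⟩ := exists_continuous_zero_one_of_isClosed hV.isClosed_compl
    isClosed_singleton (disjoint_singleton_right.2 (not_not.2 hy))
  have hmul (g : C(K, ℝ)) (hg : 0 ≤ g) : φ * h * g ≤ P g := by
    refine ContinuousMap.le_def.2 fun z => ?_
    by_cases hz : z ∈ V
    · calc (φ * h * g) z = φ z * (h z * g z) := by simp [mul_assoc]
        _ ≤ h z * g z := mul_le_of_le_one_left (mul_nonneg (h0 z) (hg z)) (hφ z).2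
        _ ≤ P g z := hle z hz g hg
    · simpa [hφ0 hz] using hpos g hg z
  calc h y = (φ * h) y := by simp [hφ1 rfl]
    _ ≤ ‖φ * h‖ := (φ * h).apply_le_norm y
    _ ≤ α := hmax _ (mul_nonneg (ContinuousMap.le_def.2 fun w => (hφ w).1) h0) hmul

theorem sum_map_bump_apply_eq_one [CompactSpace K] (hproj : ∀ f, P (P f) = P f)
    (hpos : ∀ f : C(K, ℝ), 0 ≤ f → 0 ≤ P f) (hunit : P 1 = 1) {α : ℝ} (hα : 0 < α)
    (hdom : ∀ f : C(K, ℝ), 0 ≤ f → α • f ≤ P f) {x : K} {S : Finset K} (hS : ↑S = fiber P x)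
    {U : K → Set K} {b : K → C(K, ℝ)} (hb : IsBumpFamily S U b) :
    ∑ y ∈ S, P (b y) y = 1 := by
  have hr : EqOn ⇑((1 : C(K, ℝ)) - ∑ y ∈ S, b y) 0 (fiber P x) := fun y hy => by
    rw [← hS] at hy
    simp [ContinuousMap.sum_apply, hb.sum_apply_self hy]
  have := map_apply_eq_zero_of_eqOn_fiber hproj hpos hunit hα hdom (sub_nonneg.2 hb.sum_le_one) hr
  rw [map_sub, map_sum, hunit] at this
  simp only [ContinuousMap.sub_apply, ContinuousMap.one_apply, ContinuousMap.sum_apply] at this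
  calc ∑ y ∈ S, P (b y) y = ∑ y ∈ S, P (b y) x :=
        sum_congr rfl fun y hy => (hS ▸ hy : y ∈ fiber P x) (b y)
    _ = 1 := by linarith

/-- On a fiber of maximal cardinality `k`, nearby fibers meet each of the `k` disjoint bump
neighbourhoods in exactly one point, so `P (b y)` is a multiplier below `P` near `y`. -/
theorem map_bump_apply_le_of_ncard_fiber_le [CompactSpace K] [T2Space K]
    (hproj : ∀ f, P (P f) = P f) (hpos : ∀ f : C(K, ℝ), 0 ≤ f → 0 ≤ P f) (hunit : P 1 = 1)
    {α : ℝ} (hα : 0 < α) (hdom : ∀ f : C(K, ℝ), 0 ≤ f → α • f ≤ P f)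
    (hmax : ∀ f : C(K, ℝ), 0 ≤ f → (∀ g : C(K, ℝ), 0 ≤ g → f * g ≤ P g) → ‖f‖ ≤ α)
    {x : K} (hx : ∀ z, (fiber P z).ncard ≤ (fiber P x).ncard) {S : Finset K}
    (hS : ↑S = fiber P x) {U : K → Set K} {b : K → C(K, ℝ)} (hb : IsBumpFamily S U b)
    {y : K} (hy : y ∈ S) : P (b y) y ≤ α := by
  set W := ⋂ w ∈ S, {z | 0 < P (b w) z}
  have hWopen : IsOpen W :=
    isOpen_biInter_finset fun w _ => isOpen_lt continuous_const (P (b w)).continuous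
  have hyW : y ∈ W := mem_iInter₂.2 fun w hw => by
    have hyx : y ∈ fiber P x := hS ▸ hy
    have hwx : w ∈ fiber P x := hS ▸ hw
    show 0 < P (b w) y
    rw [hyx (b w), ← hwx (b w)]
    exact hα.trans_le (le_map_apply_of_apply_eq_one hdom (hb.nonneg w) (hb.apply_self w))
  refine apply_le_of_mul_le_map_on hpos hmax (hWopen.inter (hb.isOpen y)) ⟨hyW, hb.mem y⟩
    (hpos _ (hb.nonneg y)) ?_
  rintro z ⟨hzW, hzU⟩ g hg
  have hmeet : ∀ w ∈ S, (fiber P z ∩ U w).Nonempty := by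
    intro w hw
    by_contra hempty
    have hvan : EqOn (b w) 0 (fiber P z) := fun v hv =>
      hb.apply_of_notMem w v fun hvU => hempty ⟨v, hv, hvU⟩
    exact (mem_iInter₂.1 hzW w hw).ne'
      (map_apply_eq_zero_of_eqOn_fiber hproj hpos hunit hα hdom (hb.nonneg w) hvan)
  have hsub := Set.subsingleton_inter_of_ncard_le_card hb.pairwiseDisjoint
    (finite_fiber hpos hunit hα hdom z) (by rw [← ncard_coe_finset, hS]; exact hx z) hmeet hy
  exact map_apply_mul_le hproj hpos hunit hα hdom (fun v hv => hsub hv ⟨mem_fiber_self z, hzU⟩)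
    (hb.le_one y) (hb.apply_of_notMem y) hg

end PositiveProjection

open PositiveProjection

/-- Main theorem: if `P` is a positive unital projection on `C(K)`, `K` a
non-empty compact Hausdorff space, `α • id ≤ P`, and every multiplication
operator `M_f` with `0 ≤ M_f ≤ P` satisfies `‖f‖ ≤ α`, then `α = 0` or
`α = 1/n` for some positive integer `n`. -/
theorem stmt5 {K : Type*} [TopologicalSpace K] [CompactSpace K] [T2Space K]
    [Nonempty K]
    (P : C(K, ℝ) →ₗ[ℝ] C(K, ℝ))
    (hproj : ∀ f, P (P f) = P f)
    (hpos : ∀ f : C(K, ℝ), 0 ≤ f → 0 ≤ P f)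
    (hunit : P 1 = 1)
    (α : ℝ) (hα : 0 ≤ α)
    (hdom : ∀ f : C(K, ℝ), 0 ≤ f → α • f ≤ P f)
    (hmax : ∀ f : C(K, ℝ), 0 ≤ f → (∀ g : C(K, ℝ), 0 ≤ g → f * g ≤ P g) → ‖f‖ ≤ α) :
    α = 0 ∨ ∃ n : ℕ, 0 < n ∧ α = 1 / n := by
  rcases hα.eq_or_lt with h0 | hα
  · exact Or.inl h0.symm
  obtain ⟨x, hx⟩ := exists_forall_ncard_fiber_le hpos hunit hα hdom
  obtain ⟨S, hS⟩ := (finite_fiber hpos hunit hα hdom x).exists_finset_coe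
  obtain ⟨U, b, hb⟩ := IsBumpFamily.exists S
  have hbump : ∀ y ∈ S, P (b y) y = α := fun y hy => le_antisymm
    (map_bump_apply_le_of_ncard_fiber_le hproj hpos hunit hα hdom hmax hx hS hb hy)
    (le_map_apply_of_apply_eq_one hdom (hb.nonneg y) (hb.apply_self y))
  have hcard : #S * α = 1 := by
    rw [← sum_map_bump_apply_eq_one hproj hpos hunit hα hdom hS hb, sum_congr rfl hbump,
      sum_const, nsmul_eq_mul]
  exact Or.inr ⟨#S, Nat.pos_of_ne_zero fun h => by simp [h] at hcard,
    eq_one_div_of_mul_eq_one_right hcard⟩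
end

section
/- Let $K$, $P$, $\alpha>0$ be as in the setting of positive unital projections on $C(K)$ dominating $\alpha\,\mathrm{id}$, and let $\mu_t=P^*\delta_t$. If for some $t\in K$ one has $\mu_s=\mu_t$ for all atoms $s$ of $\mu_t$, then the atomic supports satisfy: for all $s\in K$, either $J_s=J_t$ (when $s\in J_t$) or $J_s\cap J_t=\emptyset$, where $J_r$ denotes the set of atoms of $\mu_r$. -/
/-!
Write `μ x` for `P^* δ_x`, so that `∫ f dμ x = P f x`. Because `P` is idempotent, `μ s` is
`P^*`-invariant: `∫ f dμ s = ∫ P f dμ s`. Suppose `r` is an atom of both `μ s` and `μ t`, where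
`μ t {s} = 0` and `μ r = μ t`. Evaluating `∫ P f dμ s` at the atom `r` gives `μ s ≥ c μ t` with
`c = μ s {r} > 0`. Domination by `α id` makes `s` an atom of `μ s` of mass `a ≥ α`. If
`μ s ≥ γ μ t`, then this bound already holds off `{s}` (which is `μ t`-null), and applying `P^*`
once more gives `μ s ≥ a μ s + γ μ t`, i.e. `μ s ≥ γ / (1 - a) μ t`. Iterating makes `γ`
unbounded, which is absurd for finite measures. Inequalities between the measures are tested on
nonnegative continuous functions and transferred to Borel sets by regularity and Urysohn's lemma.
-/

open MeasureTheory Set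

section Atoms

variable {X : Type*} [MeasurableSpace X] [MeasurableSingletonClass X] {μ : Measure X}

lemma integral_eq_measureReal_singleton_mul_add {f : X → ℝ} (hfi : Integrable f μ) (y : X) :
    ∫ x, f x ∂μ = μ.real {y} * f y + ∫ x in {y}ᶜ, f x ∂μ := by
  rw [← smul_eq_mul, ← integral_singleton, integral_add_compl (measurableSet_singleton y) hfi]

lemma measureReal_singleton_mul_le_integral {f : X → ℝ} (hf : 0 ≤ f) (hfi : Integrable f μ)
    (y : X) : μ.real {y} * f y ≤ ∫ x, f x ∂μ := by
  rw [← smul_eq_mul, ← integral_singleton]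
  exact setIntegral_le_integral hfi (Filter.Eventually.of_forall hf)

end Atoms

section Comparison

variable {X : Type*} [MeasurableSpace X] {μ : Measure X} [IsFiniteMeasure μ]

lemma integral_le_measureReal_of_eqOn_zero {U : Set X} (hU : MeasurableSet U) {f : X → ℝ}
    (hfi : Integrable f μ) (hf : ∀ x, f x ≤ 1) (hfU : EqOn f 0 Uᶜ) :
    ∫ x, f x ∂μ ≤ μ.real U := by
  rw [← integral_indicator_one hU]
  refine integral_mono hfi ((integrable_const 1).indicator hU) fun x => ?_
  by_cases hx : x ∈ U
  · simpa [hx] using hf x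
  · simp [hx, hfU hx]

lemma measureReal_le_integral_of_eqOn_one {C : Set X} (hC : MeasurableSet C) {f : X → ℝ}
    (hfi : Integrable f μ) (hf : 0 ≤ f) (hfC : EqOn f 1 C) :
    μ.real C ≤ ∫ x, f x ∂μ := by
  rw [← integral_indicator_one hC]
  refine integral_mono ((integrable_const 1).indicator hC) hfi fun x => ?_
  by_cases hx : x ∈ C
  · simp [hx, hfC hx]
  · simpa [hx] using hf x

variable [TopologicalSpace X] [CompactSpace X] [OpensMeasurableSpace X]

lemma integrable_continuousMap (ν : Measure X) [IsFiniteMeasure ν] (f : C(X, ℝ)) :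
    Integrable f ν :=
  f.continuous.integrable_of_hasCompactSupport (HasCompactSupport.of_compactSpace _)

variable [T2Space X]

theorem ofReal_smul_le_of_forall_integral_le [μ.Regular] {ν : Measure X} [IsFiniteMeasure ν]
    [ν.OuterRegular] {γ : ℝ} (hγ : 0 ≤ γ)
    (h : ∀ f : C(X, ℝ), 0 ≤ f → γ * ∫ x, f x ∂μ ≤ ∫ x, f x ∂ν) :
    ENNReal.ofReal γ • μ ≤ ν := by
  have hopen : ∀ U, IsOpen U → ENNReal.ofReal γ * μ U ≤ ν U := by
    intro U hU
    rw [hU.measure_eq_iSup_isCompact μ]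
    simp only [ENNReal.mul_iSup, iSup_le_iff]
    intro C hCU hC
    obtain ⟨φ, hφC, hφU, -, hφ⟩ := exists_continuous_one_zero_of_isCompact hC
      hU.isClosed_compl (disjoint_compl_right_iff_subset.2 hCU)
    rw [← ofReal_measureReal, ← ofReal_measureReal, ← ENNReal.ofReal_mul hγ]
    refine ENNReal.ofReal_le_ofReal ?_
    calc γ * μ.real C ≤ γ * ∫ x, φ x ∂μ := by
          gcongr
          exact measureReal_le_integral_of_eqOn_one hC.measurableSet
            (integrable_continuousMap μ φ) (fun x => (hφ x).1) hφC
      _ ≤ ∫ x, φ x ∂ν := h φ fun x => (hφ x).1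
      _ ≤ ν.real U := integral_le_measureReal_of_eqOn_zero hU.measurableSet
            (integrable_continuousMap ν φ) (fun x => (hφ x).2) hφU
  refine Measure.le_iff'.2 fun A => ?_
  rw [A.measure_eq_iInf_isOpen ν, Measure.smul_apply, smul_eq_mul]
  refine le_iInf₂ fun U hAU => le_iInf fun hU => ?_
  calc ENNReal.ofReal γ * μ A ≤ ENNReal.ofReal γ * μ U := by gcongr
    _ ≤ ν U := hopen U hU

theorem ofReal_le_measure_singleton [μ.OuterRegular] {β : ℝ} {x : X}
    (h : ∀ f : C(X, ℝ), 0 ≤ f → β * f x ≤ ∫ y, f y ∂μ) : ENNReal.ofReal β ≤ μ {x} := by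
  rw [Set.measure_eq_iInf_isOpen]
  refine le_iInf₂ fun U hxU => le_iInf fun hU => ?_
  obtain ⟨φ, hφx, hφU, -, hφ⟩ := exists_continuous_one_zero_of_isCompact isCompact_singleton
    hU.isClosed_compl (disjoint_compl_right_iff_subset.2 hxU)
  rw [← ofReal_measureReal]
  refine ENNReal.ofReal_le_ofReal ?_
  calc β = β * φ x := by rw [hφx rfl, Pi.one_apply, mul_one]
    _ ≤ ∫ y, φ y ∂μ := h φ fun y => (hφ y).1
    _ ≤ μ.real U := integral_le_measureReal_of_eqOn_zero hU.measurableSet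
          (integrable_continuousMap μ φ) (fun y => (hφ y).2) hφU

end Comparison

lemma not_bddAbove_of_forall_div_mem {S : Set ℝ} {c q : ℝ} (hc : 0 < c) (hcS : c ∈ S)
    (hq₀ : 0 < q) (hq₁ : q < 1) (hS : ∀ γ ∈ S, γ / q ∈ S) : ¬ BddAbove S := by
  rintro ⟨B, hB⟩
  have hpow : ∀ n : ℕ, c / q ^ n ∈ S := by
    intro n
    induction n with
    | zero => simpa using hcS
    | succ n ih => simpa [pow_succ, div_div] using hS _ ih
  obtain ⟨n, hn⟩ := exists_pow_lt_of_lt_one (div_pos hc (by positivity : 0 < |B| + 1)) hq₁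
  have hlt : |B| + 1 < c / q ^ n := by
    rw [lt_div_iff₀ (by positivity)] at hn
    rw [lt_div_iff₀ (pow_pos hq₀ n)]
    linarith
  linarith [hB (hpow n), le_abs_self B]

section Projection

variable {K : Type*} [TopologicalSpace K] [MeasurableSpace K] {P : C(K, ℝ) →ₗ[ℝ] C(K, ℝ)}
  {μ : K → Measure K} [CompactSpace K] [T2Space K] [OpensMeasurableSpace K]
  [∀ t, IsFiniteMeasure (μ t)]

theorem ofReal_le_measure_singleton_self [∀ t, (μ t).Regular] {α : ℝ}
    (hdom : ∀ f : C(K, ℝ), 0 ≤ f → α • f ≤ P f)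
    (hrep : ∀ (t : K) (f : C(K, ℝ)), ∫ x, f x ∂(μ t) = P f t) (x : K) :
    ENNReal.ofReal α ≤ μ x {x} :=
  ofReal_le_measure_singleton fun f hf => (hrep x f).symm ▸ hdom f hf x

theorem measureReal_singleton_mul_integral_le (hproj : ∀ f, P (P f) = P f)
    (hpos : ∀ f : C(K, ℝ), 0 ≤ f → 0 ≤ P f)
    (hrep : ∀ (t : K) (f : C(K, ℝ)), ∫ x, f x ∂(μ t) = P f t) {r s t : K} (hrt : μ r = μ t)
    (g : C(K, ℝ)) (hg : 0 ≤ g) : (μ s).real {r} * ∫ x, g x ∂(μ t) ≤ ∫ x, g x ∂(μ s) :=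
  calc (μ s).real {r} * ∫ x, g x ∂(μ t) = (μ s).real {r} * P g r := by rw [← hrt, hrep]
    _ ≤ ∫ x, P g x ∂(μ s) :=
        measureReal_singleton_mul_le_integral (hpos g hg) (integrable_continuousMap _ _) r
    _ = ∫ x, g x ∂(μ s) := by rw [hrep, hproj, hrep]

theorem mul_integral_le_one_sub_mul_integral (hproj : ∀ f, P (P f) = P f)
    (hpos : ∀ f : C(K, ℝ), 0 ≤ f → 0 ≤ P f)
    (hrep : ∀ (t : K) (f : C(K, ℝ)), ∫ x, f x ∂(μ t) = P f t) {s t : K} (hst : μ t {s} = 0)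
    {γ : ℝ} (hγ : 0 ≤ γ) (hle : ENNReal.ofReal γ • μ t ≤ μ s) (g : C(K, ℝ)) (hg : 0 ≤ g) :
    γ * ∫ x, g x ∂(μ t) ≤ (1 - (μ s).real {s}) * ∫ x, g x ∂(μ s) := by
  have hfix : ∀ x, ∫ y, P g y ∂(μ x) = P g x := fun x => by rw [hrep, hproj]
  have hoff : γ * ∫ y in {s}ᶜ, P g y ∂(μ t) ≤ ∫ y in {s}ᶜ, P g y ∂(μ s) := by
    rw [← ENNReal.toReal_ofReal hγ, ← smul_eq_mul, ← integral_smul_measure,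
      ← Measure.restrict_smul]
    exact integral_mono_measure (Measure.restrict_mono subset_rfl hle)
      (Filter.Eventually.of_forall (hpos g hg)) (integrable_continuousMap _ _).restrict
  have hs_split :=
    integral_eq_measureReal_singleton_mul_add (integrable_continuousMap (μ s) (P g)) s
  have ht_split :=
    integral_eq_measureReal_singleton_mul_add (integrable_continuousMap (μ t) (P g)) s
  rw [hfix] at hs_split ht_split
  rw [measureReal_def, hst, ENNReal.toReal_zero, zero_mul, zero_add] at ht_split
  rw [hrep, hrep, ht_split]
  linarith

theorem measure_singleton_eq_zero_of_measure_singleton_eq_zero (hproj : ∀ f, P (P f) = P f)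
    (hpos : ∀ f : C(K, ℝ), 0 ≤ f → 0 ≤ P f) [∀ t, (μ t).Regular] {α : ℝ} (hα : 0 < α)
    (hdom : ∀ f : C(K, ℝ), 0 ≤ f → α • f ≤ P f)
    (hrep : ∀ (t : K) (f : C(K, ℝ)), ∫ x, f x ∂(μ t) = P f t) {r s t : K} (hst : μ t {s} = 0)
    (htr : μ t {r} ≠ 0) (hrt : μ r = μ t) : μ s {r} = 0 := by
  by_contra hsr
  set a := (μ s).real {s}
  set c := (μ s).real {r}
  set S := {γ : ℝ | 0 ≤ γ ∧ ∀ g : C(K, ℝ), 0 ≤ g → γ * ∫ x, g x ∂(μ t) ≤ ∫ x, g x ∂(μ s)}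
  have hc : 0 < c := ENNReal.toReal_pos hsr (measure_ne_top _ _)
  have hcS : c ∈ S := ⟨hc.le, measureReal_singleton_mul_integral_le hproj hpos hrep hrt⟩
  have ha : α ≤ a := (ENNReal.ofReal_le_iff_le_toReal (measure_ne_top _ _)).1
    (ofReal_le_measure_singleton_self hdom hrep s)
  have hstep : ∀ γ ∈ S, ∀ g : C(K, ℝ), 0 ≤ g →
      γ * ∫ x, g x ∂(μ t) ≤ (1 - a) * ∫ x, g x ∂(μ s) := fun γ hγ =>
    mul_integral_le_one_sub_mul_integral hproj hpos hrep hst hγ.1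
      (ofReal_smul_le_of_forall_integral_le hγ.1 hγ.2)
  have hmass : 0 < (μ t).real univ :=
    (ENNReal.toReal_pos htr (measure_ne_top _ _)).trans_le (measureReal_mono (subset_univ _))
  have hone : ∀ ν : Measure K, ∫ x, (1 : C(K, ℝ)) x ∂ν = ν.real univ := by simp
  have ha1 : 0 < 1 - a := by
    have h := hstep c hcS 1 zero_le_one
    rw [hone, hone] at h
    exact pos_of_mul_pos_left ((mul_pos hc hmass).trans_le h) measureReal_nonneg
  have hdiv : ∀ γ ∈ S, γ / (1 - a) ∈ S := fun γ hγ =>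
    ⟨div_nonneg hγ.1 ha1.le, fun g hg => by
      rw [div_mul_eq_mul_div, div_le_iff₀ ha1, mul_comm _ (1 - a)]
      exact hstep γ hγ g hg⟩
  have hbdd : BddAbove S := ⟨(μ s).real univ / (μ t).real univ, fun γ hγ => by
    rw [le_div_iff₀ hmass, ← hone, ← hone]
    exact hγ.2 1 zero_le_one⟩
  exact not_bddAbove_of_forall_div_mem hc hcS ha1 (by linarith) hdiv hbdd

end Projection

theorem stmt8_general {K : Type*} [TopologicalSpace K] [CompactSpace K] [T2Space K]
    [MeasurableSpace K] [BorelSpace K]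
    (P : C(K, ℝ) →ₗ[ℝ] C(K, ℝ))
    (hproj : ∀ f, P (P f) = P f)
    (hpos : ∀ f : C(K, ℝ), 0 ≤ f → 0 ≤ P f)
    (α : ℝ) (hα : 0 < α)
    (hdom : ∀ f : C(K, ℝ), 0 ≤ f → α • f ≤ P f)
    (μ : K → Measure K)
    (hfin : ∀ t, IsFiniteMeasure (μ t))
    (hreg : ∀ t, (μ t).Regular)
    (hrep : ∀ (t : K) (f : C(K, ℝ)), ∫ x, f x ∂(μ t) = P f t)
    (t : K)
    (hatoms : ∀ s : K, μ t {s} ≠ 0 → μ s = μ t) :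
    ∀ s : K,
      (μ t {s} ≠ 0 → {r : K | μ s {r} ≠ 0} = {r : K | μ t {r} ≠ 0}) ∧
      (μ t {s} = 0 → {r : K | μ s {r} ≠ 0} ∩ {r : K | μ t {r} ≠ 0} = ∅) := by
  have := hfin
  have := hreg
  intro s
  refine ⟨fun hs => by rw [hatoms s hs], fun hs => eq_empty_iff_forall_notMem.2 ?_⟩
  rintro r ⟨hsr, htr⟩
  exact hsr <| measure_singleton_eq_zero_of_measure_singleton_eq_zero hproj hpos hα hdom hrep hs
    htr (hatoms r htr)

/-- In the setting of a positive unital projection `P` on `C(K)` with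
`α • id ≤ P`, `α > 0`, and representing regular Borel measures `μ t` for
`P^* δ_t`: if for some `t` one has `μ s = μ t` for every atom `s` of `μ t`,
then for every `s ∈ K`, either `J s = J t` (when `s ∈ J t`) or
`J s ∩ J t = ∅` (when `s ∉ J t`), where `J r` is the set of atoms of `μ r`. -/
theorem stmt8 {K : Type*} [TopologicalSpace K] [CompactSpace K] [T2Space K]
    [MeasurableSpace K] [BorelSpace K]
    (P : C(K, ℝ) →ₗ[ℝ] C(K, ℝ))
    (hproj : ∀ f, P (P f) = P f)
    (hpos : ∀ f : C(K, ℝ), 0 ≤ f → 0 ≤ P f)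
    (hunit : P 1 = 1)
    (α : ℝ) (hα : 0 < α)
    (hdom : ∀ f : C(K, ℝ), 0 ≤ f → α • f ≤ P f)
    (μ : K → Measure K)
    (hfin : ∀ t, IsFiniteMeasure (μ t))
    (hreg : ∀ t, (μ t).Regular)
    (hrep : ∀ (t : K) (f : C(K, ℝ)), ∫ x, f x ∂(μ t) = P f t)
    (t : K)
    (hatoms : ∀ s : K, μ t {s} ≠ 0 → μ s = μ t) :
    ∀ s : K,
      (μ t {s} ≠ 0 → {r : K | μ s {r} ≠ 0} = {r : K | μ t {r} ≠ 0}) ∧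
      (μ t {s} = 0 → {r : K | μ s {r} ≠ 0} ∩ {r : K | μ t {r} ≠ 0} = ∅) :=
  stmt8_general P hproj hpos α hα hdom μ hfin hreg hrep t hatoms
end

section
/- Let $A$ be a non-empty set and $1\le p<\infty$. The only contractive positive projection $P\colon\ell^p(A)\to\ell^p(A)$ with constant diagonal $0$ is $P=0$. -/
/-!
For `p > 1`: if `y = P eₐ` has `y a = 0`, then `eₐ` and `y` have disjoint supports, so
`‖s • eₐ + y‖ᵖ = sᵖ + ‖y‖ᵖ`, while `P (s • eₐ + y) = (1 + s) • y`. Contractivity and Bernoulli's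
inequality give `p ‖y‖ᵖ s ≤ sᵖ` for every `s > 0`, which forces `y = 0`.

For `p = 1`, the norm is additive on positive vectors. Let `m` be the supremum of the matrix
entries `(P e_c) b`. Each column `ν = P e_c` is a positive fixed vector of norm `≤ 1`, and expanding
`ν b = ∑ c, ν c * (P e_c) b` with vanishing diagonal gives `ν b ≤ m (1 - ν b)`. Taking the
supremum, `m ≤ m / (1 + m)`, so `m = 0`.
-/

open scoped ENNReal lp

theorem nonpos_of_forall_mul_le_rpow {k q : ℝ} (hq : 1 < q)
    (h : ∀ s : ℝ, 0 < s → k * s ≤ s ^ q) : k ≤ 0 := by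
  by_contra! hk
  set s := (k / 2) ^ (q - 1)⁻¹
  have hs : 0 < s := by positivity
  have hsq : s ^ q = k / 2 * s := by
    rw [← Real.rpow_inv_rpow (by positivity : 0 ≤ k / 2) (sub_ne_zero.2 hq.ne'),
      ← Real.rpow_add_one hs.ne', sub_add_cancel]
  nlinarith [h s hs]

namespace lp

theorem hasSum_of_nonneg {A : Type*} {x : ℓ^1(A, ℝ)} (hx : ∀ b, 0 ≤ x b) :
    HasSum (fun b => x b) ‖x‖ := by
  simpa [Real.norm_of_nonneg (hx _)] using lp.hasSum_norm (p := 1) (by simp) x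

variable {A : Type*} [DecidableEq A] {p : ℝ≥0∞}

theorem single_one_apply_nonneg (c b : A) : 0 ≤ (lp.single p c (1 : ℝ) : ℓ^p(A, ℝ)) b := by
  rw [lp.single_apply, Pi.single_apply]
  split_ifs <;> norm_num

theorem single_eq_smul_single_one (c : A) (r : ℝ) :
    (lp.single p c r : ℓ^p(A, ℝ)) = r • lp.single p c (1 : ℝ) := by
  rw [← lp.single_smul, smul_eq_mul, mul_one]

theorem norm_rpow_single_add (hp : 0 < p.toReal) {a : A} (r : ℝ) {y : ℓ^p(A, ℝ)}
    (hy : y a = 0) :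
    ‖(lp.single p a r : ℓ^p(A, ℝ)) + y‖ ^ p.toReal = ‖r‖ ^ p.toReal + ‖y‖ ^ p.toReal := by
  have h : HasSum (Function.update (fun b => ‖y b‖ ^ p.toReal) a (‖r‖ ^ p.toReal))
      (‖r‖ ^ p.toReal + ‖y‖ ^ p.toReal) := by
    simpa [hy, Real.zero_rpow hp.ne'] using (lp.hasSum_norm hp y).update a (‖r‖ ^ p.toReal)
  refine (lp.hasSum_norm hp _).unique (h.congr_fun fun b => ?_)
  rcases eq_or_ne b a with rfl | hb
  · simp [hy]
  · simp [hb]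

variable [Fact (1 ≤ p)]

theorem hasSum_smul_map_single_one {F : Type*} [NormedAddCommGroup F] [NormedSpace ℝ F]
    (hp : p ≠ ∞) (T : ℓ^p(A, ℝ) →L[ℝ] F) (x : ℓ^p(A, ℝ)) :
    HasSum (fun c => x c • T (lp.single p c (1 : ℝ))) (T x) := by
  convert (lp.hasSum_single hp x).mapL T using 2 with c
  rw [single_eq_smul_single_one c (x c), map_smul]

theorem eq_zero_of_map_single_one {F : Type*} [NormedAddCommGroup F] [NormedSpace ℝ F]
    (hp : p ≠ ∞) {T : ℓ^p(A, ℝ) →L[ℝ] F} (hT : ∀ c, T (lp.single p c (1 : ℝ)) = 0) : T = 0 := by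
  ext x
  have h := hasSum_smul_map_single_one hp T x
  simp only [hT, smul_zero] at h
  exact h.unique hasSum_zero

theorem map_single_one_eq_zero_of_one_lt_toReal (hp : 1 < p.toReal)
    {P : ℓ^p(A, ℝ) →ₗ[ℝ] ℓ^p(A, ℝ)} (hproj : ∀ x, P (P x) = P x) (hcontr : ∀ x, ‖P x‖ ≤ ‖x‖)
    {a : A} (ha : P (lp.single p a (1 : ℝ)) a = 0) : P (lp.single p a (1 : ℝ)) = 0 := by
  set q := p.toReal
  set y := P (lp.single p a (1 : ℝ))
  have hq : 0 < q := one_pos.trans hp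
  have hbound : ∀ s : ℝ, 0 < s → q * ‖y‖ ^ q * s ≤ s ^ q := by
    intro s hs
    have hPx : P (lp.single p a s + y) = (1 + s) • y := by
      rw [single_eq_smul_single_one, map_add, map_smul, hproj, add_smul, one_smul, add_comm]
    have hcontr' : ((1 + s) * ‖y‖) ^ q ≤ s ^ q + ‖y‖ ^ q := by
      have h := Real.rpow_le_rpow (norm_nonneg _) (hcontr (lp.single p a s + y)) hq.le
      rwa [hPx, norm_smul, Real.norm_of_nonneg (by positivity), norm_rpow_single_add hq s ha,
        Real.norm_of_nonneg hs.le] at h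
    have hbernoulli : 1 + q * s ≤ (1 + s) ^ q :=
      one_add_mul_self_le_rpow_one_add (by linarith) hp.le
    calc q * ‖y‖ ^ q * s = (1 + q * s) * ‖y‖ ^ q - ‖y‖ ^ q := by ring
      _ ≤ (1 + s) ^ q * ‖y‖ ^ q - ‖y‖ ^ q := by gcongr
      _ = ((1 + s) * ‖y‖) ^ q - ‖y‖ ^ q := by rw [Real.mul_rpow (by positivity) (norm_nonneg _)]
      _ ≤ s ^ q := by linarith
  have hy : q * ‖y‖ ^ q ≤ 0 := nonpos_of_forall_mul_le_rpow hp hbound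
  by_contra hy0
  have : 0 < q * ‖y‖ ^ q := by
    have := norm_pos_iff.2 hy0
    positivity
  linarith

theorem apply_le_mul_norm_sub_of_map_eq_self {P : ℓ^1(A, ℝ) →L[ℝ] ℓ^1(A, ℝ)}
    (hdiag : ∀ a, P (lp.single 1 a (1 : ℝ)) a = 0) {m : ℝ}
    (hm : ∀ c b, P (lp.single 1 c (1 : ℝ)) b ≤ m) {ν : ℓ^1(A, ℝ)} (hν : ∀ b, 0 ≤ ν b)
    (hfix : P ν = ν) (b : A) : ν b ≤ m * (‖ν‖ - ν b) := by
  have hexpand : HasSum (fun c => ν c * P (lp.single 1 c (1 : ℝ)) b) (ν b) := by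
    have h := hasSum_smul_map_single_one ENNReal.one_ne_top
      ((evalCLM ℝ (fun _ : A => ℝ) 1 b).comp P) ν
    rw [ContinuousLinearMap.comp_apply, hfix] at h
    exact h
  have hbound : HasSum (Function.update (fun c => m * ν c) b 0) (m * (‖ν‖ - ν b)) := by
    rw [show m * (‖ν‖ - ν b) = 0 - m * ν b + m * ‖ν‖ by ring]
    exact ((hasSum_of_nonneg hν).mul_left m).update b 0
  refine hasSum_le (fun c => ?_) hexpand hbound
  rcases eq_or_ne c b with rfl | hcb
  · simp [hdiag]
  · rw [Function.update_of_ne hcb, mul_comm m]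
    exact mul_le_mul_of_nonneg_left (hm c b) (hν c)

theorem map_single_one_eq_zero_of_diag_eq_zero {P : ℓ^1(A, ℝ) →L[ℝ] ℓ^1(A, ℝ)}
    (hproj : ∀ x, P (P x) = P x) (hpos : ∀ x : ℓ^1(A, ℝ), (∀ a, 0 ≤ x a) → ∀ a, 0 ≤ P x a)
    (hcontr : ∀ x, ‖P x‖ ≤ ‖x‖) (hdiag : ∀ a, P (lp.single 1 a (1 : ℝ)) a = 0) (a : A) :
    P (lp.single 1 a (1 : ℝ)) = 0 := by
  set entry : A × A → ℝ := fun cb => P (lp.single 1 cb.1 (1 : ℝ)) cb.2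
  have entry_nonneg (cb : A × A) : 0 ≤ entry cb := hpos _ (single_one_apply_nonneg cb.1) cb.2
  have norm_column_le (c : A) : ‖P (lp.single 1 c (1 : ℝ))‖ ≤ 1 :=
    calc ‖P (lp.single 1 c (1 : ℝ))‖ ≤ ‖(lp.single 1 c (1 : ℝ) : ℓ^1(A, ℝ))‖ := hcontr _
      _ = 1 := by rw [lp.norm_single zero_lt_one, norm_one]
  have hbdd : BddAbove (Set.range entry) := by
    refine ⟨1, Set.forall_mem_range.2 fun cb => ?_⟩
    exact (Real.le_norm_self _).trans
      ((norm_apply_le_norm one_ne_zero _ _).trans (norm_column_le _))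
  have : Nonempty (A × A) := ⟨(a, a)⟩
  set m := ⨆ cb, entry cb
  have hm (c b : A) : entry (c, b) ≤ m := le_ciSup hbdd (c, b)
  have hm0 : 0 ≤ m := (entry_nonneg (a, a)).trans (hm a a)
  have hentry (cb : A × A) : entry cb ≤ m * (1 - entry cb) := by
    refine (apply_le_mul_norm_sub_of_map_eq_self hdiag hm (hpos _ (single_one_apply_nonneg _))
      (hproj _) cb.2).trans ?_
    gcongr
    exact norm_column_le cb.1
  have hm_le : m ≤ m / (1 + m) :=
    ciSup_le fun cb => (le_div_iff₀ (by linarith)).2 (by nlinarith [hentry cb])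
  have hm_eq : m = 0 := by
    rw [le_div_iff₀ (by linarith)] at hm_le
    nlinarith
  ext b
  rw [lp.coeFn_zero, Pi.zero_apply]
  exact le_antisymm ((hm a b).trans hm_eq.le) (entry_nonneg (a, b))

end lp

theorem stmt12_general {A : Type*} [DecidableEq A]
    (p : ℝ≥0∞) [Fact (1 ≤ p)] (hp : p ≠ ∞)
    (P : lp (fun _ : A => ℝ) p →ₗ[ℝ] lp (fun _ : A => ℝ) p)
    (hproj : ∀ x, P (P x) = P x)
    (hpos : ∀ x : lp (fun _ : A => ℝ) p, (∀ a, 0 ≤ x a) → ∀ a, 0 ≤ P x a)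
    (hcontr : ∀ x, ‖P x‖ ≤ ‖x‖)
    (hdiag : ∀ a : A, P (lp.single p a (1 : ℝ)) a = 0) :
    P = 0 := by
  let Q : ℓ^p(A, ℝ) →L[ℝ] ℓ^p(A, ℝ) := P.mkContinuous 1 fun x => by simpa using hcontr x
  suffices Q = 0 from congrArg ContinuousLinearMap.toLinearMap this
  refine lp.eq_zero_of_map_single_one hp fun a => ?_
  have hp1 : 1 ≤ p.toReal := by
    simpa using ENNReal.toReal_mono hp (Fact.out : 1 ≤ p)
  rcases hp1.eq_or_lt with hp1 | hp1
  · obtain rfl : p = 1 := (ENNReal.toReal_eq_one_iff p).1 hp1.symm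
    exact lp.map_single_one_eq_zero_of_diag_eq_zero (P := Q) hproj hpos hcontr hdiag a
  · exact lp.map_single_one_eq_zero_of_one_lt_toReal hp1 hproj hcontr (hdiag a)

/-- The only contractive positive projection on `ℓᵖ(A)`, `1 ≤ p < ∞`, with
constant diagonal `0` (all diagonal matrix entries `(P e_a)(a)` equal `0`)
is `P = 0`. -/
theorem stmt12 {A : Type*} [Nonempty A] [DecidableEq A]
    (p : ℝ≥0∞) [Fact (1 ≤ p)] (hp : p ≠ ∞)
    (P : lp (fun _ : A => ℝ) p →ₗ[ℝ] lp (fun _ : A => ℝ) p)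
    (hproj : ∀ x, P (P x) = P x)
    (hpos : ∀ x : lp (fun _ : A => ℝ) p, (∀ a, 0 ≤ x a) → ∀ a, 0 ≤ P x a)
    (hcontr : ∀ x, ‖P x‖ ≤ ‖x‖)
    (hdiag : ∀ a : A, P (lp.single p a (1 : ℝ)) a = 0) :
    P = 0 :=
  stmt12_general p hp P hproj hpos hcontr hdiag
end

section
/- Let $X$ be a Dedekind complete vector lattice and $E\colon X\to X$ a positive projection. Then $Y=E(X)$, with the order inherited from $X$, is a Dedekind complete vector lattice whose binary supremum is given by $y_1\vee_Y y_2=E(y_1\vee y_2)$ for $y_1,y_2\in Y$. -/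
/-- The range of a positive projection `E` on a Dedekind complete vector
lattice `X`, with the inherited order, is a Dedekind complete vector lattice:
binary suprema in `Y = E(X)` are given by `y₁ ∨_Y y₂ = E (y₁ ⊔ y₂)`, and every
nonempty subset of `Y` bounded above in `Y` has a least upper bound in `Y`. -/
theorem stmt13 {X : Type*} [Lattice X] [AddCommGroup X] [Module ℝ X]
    [CovariantClass X X (· + ·) (· ≤ ·)]
    (hDC : ∀ S : Set X, S.Nonempty → BddAbove S → ∃ z, IsLUB S z)
    (E : X →ₗ[ℝ] X)
    (hproj : ∀ x, E (E x) = E x)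
    (hpos : ∀ x : X, 0 ≤ x → 0 ≤ E x) :
    (∀ y₁ ∈ Set.range E, ∀ y₂ ∈ Set.range E,
      IsLeast {z ∈ Set.range E | y₁ ≤ z ∧ y₂ ≤ z} (E (y₁ ⊔ y₂))) ∧
    (∀ S ⊆ Set.range E, S.Nonempty → (∃ b ∈ Set.range E, ∀ s ∈ S, s ≤ b) →
      ∃ z ∈ Set.range E, (∀ s ∈ S, s ≤ z) ∧
        ∀ b ∈ Set.range E, (∀ s ∈ S, s ≤ b) → z ≤ b) := by
  have hmono : ∀ a b : X, a ≤ b → E a ≤ E b := by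
    intro a b hab
    have h := hpos (b - a) (by rwa [sub_nonneg])
    rw [map_sub, sub_nonneg] at h
    exact h
  have hfix : ∀ y ∈ Set.range E, E y = y := by
    rintro _ ⟨x, rfl⟩; exact hproj x
  constructor
  · intro y₁ hy₁ y₂ hy₂
    refine ⟨⟨⟨y₁ ⊔ y₂, rfl⟩, ?_, ?_⟩, ?_⟩
    · have := hmono y₁ (y₁ ⊔ y₂) le_sup_left
      rwa [hfix y₁ hy₁] at this
    · have := hmono y₂ (y₁ ⊔ y₂) le_sup_right
      rwa [hfix y₂ hy₂] at this
    · rintro z ⟨hz, h1, h2⟩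
      have := hmono (y₁ ⊔ y₂) z (sup_le h1 h2)
      rwa [hfix z hz] at this
  · rintro S hS hne ⟨b, hb, hub⟩
    obtain ⟨z, hz⟩ := hDC S hne ⟨b, fun s hs => hub s hs⟩
    refine ⟨E z, ⟨z, rfl⟩, ?_, ?_⟩
    · intro s hs
      have := hmono s z (hz.1 hs)
      rwa [hfix s (hS hs)] at this
    · intro b' hb' hub'
      have := hmono z b' (hz.2 fun s hs => hub' s hs)
      rwa [hfix b' hb'] at this
end

section
/- For $-1\le\beta\le 0$, consider $\R^2$ with pointwise multiplication and positive cone $P_\beta^1=\{(x,y): 0\le x,\ \beta x\le y\le x\}$. Let $e=(1,1)$, $p=(1,0)$, $x=(1,\beta)$. Then $p^2=p$, $p\ge 0$, $p=\frac{\beta}{\beta-1}e+\frac{1}{1-\beta}x$, and $x\wedge e=0$ with respect to the order induced by $P_\beta^1$. -/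
/-- The lattice cone `P_β¹ = {(x,y) : 0 ≤ x, βx ≤ y ≤ x}` on `ℝ²`. -/
def coneBeta (β : ℝ) : Set (ℝ × ℝ) :=
  {w : ℝ × ℝ | 0 ≤ w.1 ∧ β * w.1 ≤ w.2 ∧ w.2 ≤ w.1}

/-- In `ℝ²` with pointwise multiplication and cone `P_β¹`, `-1 ≤ β ≤ 0`, with
`e = (1,1)`, `p = (1,0)`, `x = (1,β)`: `p² = p`, `p ≥ 0`,
`p = (β/(β-1)) • e + (1/(1-β)) • x`, and `x ⊓ e = 0` for the induced order
(`0` is a lower bound of `{x, e}` and every lower bound is `≤ 0`). -/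
theorem stmt18 (β : ℝ) (hβ₁ : -1 ≤ β) (hβ₂ : β ≤ 0) :
    ((1, 0) : ℝ × ℝ) * (1, 0) = (1, 0) ∧
    ((1, 0) : ℝ × ℝ) ∈ coneBeta β ∧
    ((1, 0) : ℝ × ℝ) = (β / (β - 1)) • ((1, 1) : ℝ × ℝ)
      + (1 / (1 - β)) • ((1, β) : ℝ × ℝ) ∧
    ((1, β) : ℝ × ℝ) ∈ coneBeta β ∧
    ((1, 1) : ℝ × ℝ) ∈ coneBeta β ∧
    (∀ y : ℝ × ℝ, ((1, β) : ℝ × ℝ) - y ∈ coneBeta β →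
      ((1, 1) : ℝ × ℝ) - y ∈ coneBeta β → -y ∈ coneBeta β) := by
  have hne : β - 1 ≠ 0 := by linarith
  have hne' : (1 : ℝ) - β ≠ 0 := by linarith
  refine ⟨by norm_num [Prod.ext_iff], ?_, ?_, ?_, ?_, ?_⟩
  · simp only [coneBeta, Set.mem_setOf_eq]
    norm_num
    exact hβ₂
  · simp only [Prod.ext_iff, Prod.smul_mk, Prod.mk_add_mk, smul_eq_mul]
    constructor <;> field_simp <;> ring
  · refine ⟨by norm_num, by norm_num, by norm_num; linarith⟩
  · refine ⟨by norm_num, by norm_num; linarith, by norm_num⟩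
  · rintro ⟨y1, y2⟩ ⟨h1, h2, h3⟩ ⟨h4, h5, h6⟩
    simp only [coneBeta, Set.mem_setOf_eq, Prod.fst_sub, Prod.snd_sub, Prod.fst_neg, Prod.snd_neg] at *
    have hy12 : y2 ≤ β * y1 := by nlinarith
    have hy21 : y1 ≤ y2 := by linarith
    have hy1 : y1 ≤ 0 := by nlinarith
    exact ⟨by linarith, by nlinarith, by linarith⟩
end
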